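/- arXiv:1410.8116 — 3 statements merged into one kernel-verified Lean document; each statement's English description precedes it below -/
import Mathlib

section
/- Let S be a finite set of real numbers, each element at least 1, with at least two elements; let m = min S and M = max S, and let d be a real number with d ∉ S and m < d < M. Set T = (S ∪ {d}) \ {m, M}, S₁ = (S ∪ {d}) \ {m}, S₂ = S \ {M}, S₃ = (S ∪ {d}) \ {M}, S₄ = S \ {m}. Then 1 = [Δ(S₁)·Δ(S₂)/(Δ(S)·Δ(T))]·[★(S₁)·★(S₂)/(★(S)·★(T))] + [Δ(S₃)·Δ(S₄)/(Δ(S)·Δ(T))]·[★(S₃)·★(S₄)/(★(S)·★(T))], all denominators being nonzero. -/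
/-- `Δ(A) = ∏_{x,y ∈ A, x < y} (y - x)`. -/
noncomputable def delta (A : Finset ℝ) : ℝ :=
  ∏ x ∈ A, ∏ y ∈ A.filter (fun y => x < y), (y - x)

/-- `★(A) = ∏_{x,y ∈ A, x < y} (x + y - 1)`. -/
noncomputable def starOp (A : Finset ℝ) : ℝ :=
  ∏ x ∈ A, ∏ y ∈ A.filter (fun y => x < y), (x + y - 1)

/-!
Writing `R = S \ {m, M}`, every set in the identity is `R` plus one or two of `m < d < M`, and the
pair product over `R ∪ {u, v}` splits as the factor of the pair `(u, v)`, the cross factors of `u`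
and `v` against `R`, and the product over `R`. After cancelling these, the identity reduces to the
factor of the pair `(m, M)` being the sum of those of `(m, d)` and `(d, M)`. This holds because
`(y - x) (x + y - 1) = φ y - φ x` with `φ t = t (t - 1)`, so `Δ(A) ★(A)` is the pair product of
the differences of `φ`.
-/

noncomputable def pairProd {α β : Type*} [LinearOrder α] [CommMonoid β] (f : α → α → β)
    (A : Finset α) : β :=
  ∏ x ∈ A, ∏ y ∈ A.filter (fun y => x < y), f x y

noncomputable def crossProd {α β : Type*} [LinearOrder α] [CommMonoid β] (f : α → α → β)
    (A : Finset α) (a : α) : β :=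
  (∏ y ∈ A.filter (fun y => a < y), f a y) * ∏ x ∈ A.filter (fun x => x < a), f x a

namespace pairProd

variable {α β : Type*} [LinearOrder α]

section CommMonoid

variable [CommMonoid β] (f : α → α → β)

theorem insert_eq {A : Finset α} {a : α} (ha : a ∉ A) :
    pairProd f (insert a A) = crossProd f A a * pairProd f A := by
  have h_above_a : (insert a A).filter (fun y => a < y) = A.filter (fun y => a < y) := by
    rw [Finset.filter_insert, if_neg (lt_irrefl a)]
  have h_old : ∀ x ∈ A, ∏ y ∈ (insert a A).filter (fun y => x < y), f x y
      = (if x < a then f x a else 1) * ∏ y ∈ A.filter (fun y => x < y), f x y := by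
    intro x _
    rw [Finset.filter_insert]
    split_ifs
    · exact Finset.prod_insert fun h => ha (Finset.mem_filter.mp h).1
    · rw [one_mul]
  rw [pairProd, pairProd, crossProd, Finset.prod_insert ha, h_above_a, Finset.prod_congr rfl h_old,
    Finset.prod_mul_distrib, ← Finset.prod_filter, mul_assoc]

theorem insert_insert_eq {R : Finset α} {u v : α} (huv : u < v) (hu : u ∉ R) (hv : v ∉ R) :
    pairProd f (insert u (insert v R)) =
      f u v * crossProd f R u * crossProd f R v * pairProd f R := by
  have hcross : crossProd f (insert v R) u = f u v * crossProd f R u := by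
    rw [crossProd, crossProd, Finset.filter_insert, if_pos huv, Finset.filter_insert,
      if_neg huv.not_gt, Finset.prod_insert fun h => hv (Finset.mem_filter.mp h).1, mul_assoc]
  rw [insert_eq f (by simp [hu, huv.ne]), insert_eq f hv, hcross]
  simp only [mul_assoc]

end CommMonoid

theorem ne_zero [CommMonoidWithZero β] [NoZeroDivisors β] [Nontrivial β] {f : α → α → β}
    {A : Finset α} (h : ∀ x ∈ A, ∀ y ∈ A, x < y → f x y ≠ 0) : pairProd f A ≠ 0 :=
  Finset.prod_ne_zero_iff.mpr fun x hx => Finset.prod_ne_zero_iff.mpr fun y hy =>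
    h x hx y (Finset.mem_filter.mp hy).1 (Finset.mem_filter.mp hy).2

variable [CommRing β] (φ : α → β)

theorem condensation {R : Finset α} {u w v : α} (huw : u < w) (hwv : w < v)
    (hu : u ∉ R) (hw : w ∉ R) (hv : v ∉ R) :
    pairProd (fun x y => φ y - φ x) (insert w (insert v R)) *
        pairProd (fun x y => φ y - φ x) (insert u R) +
      pairProd (fun x y => φ y - φ x) (insert u (insert w R)) *
        pairProd (fun x y => φ y - φ x) (insert v R) =
      pairProd (fun x y => φ y - φ x) (insert u (insert v R)) *
        pairProd (fun x y => φ y - φ x) (insert w R) := by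
  simp only [insert_insert_eq _ huw hu hw, insert_insert_eq _ hwv hw hv,
    insert_insert_eq _ (huw.trans hwv) hu hv, insert_eq _ hu, insert_eq _ hw, insert_eq _ hv]
  ring

theorem condensation_erase {S : Finset α} {m d M : α} (hmS : m ∈ S) (hMS : M ∈ S) (hdS : d ∉ S)
    (hmd : m < d) (hdM : d < M) :
    pairProd (fun x y => φ y - φ x) ((insert d S).erase m) *
        pairProd (fun x y => φ y - φ x) (S.erase M) +
      pairProd (fun x y => φ y - φ x) ((insert d S).erase M) *
        pairProd (fun x y => φ y - φ x) (S.erase m) =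
      pairProd (fun x y => φ y - φ x) S *
        pairProd (fun x y => φ y - φ x) (((insert d S).erase m).erase M) := by
  set R := (S.erase m).erase M
  have hmM : m < M := hmd.trans hdM
  have hmR : m ∉ R := by simp [R]
  have hMR : M ∉ R := by simp [R]
  have hdR : d ∉ R := by simp [R, hdS]
  have hSm : S.erase m = insert M R := (Finset.insert_erase (by simp [hMS, hmM.ne'])).symm
  have hSM : S.erase M = insert m R := by
    rw [show R = (S.erase M).erase m from Finset.erase_right_comm,
      Finset.insert_erase (by simp [hmS, hmM.ne])]
  have hS : S = insert m (insert M R) := by rw [← hSm, Finset.insert_erase hmS]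
  have hT : ((insert d S).erase m).erase M = insert d R := by
    rw [Finset.erase_insert_of_ne hmd.ne', Finset.erase_insert_of_ne hdM.ne]
  have hS₁ : (insert d S).erase m = insert d (insert M R) := by
    rw [Finset.erase_insert_of_ne hmd.ne', hSm]
  have hS₃ : (insert d S).erase M = insert m (insert d R) := by
    rw [Finset.erase_insert_of_ne hdM.ne, hSM, Finset.insert_comm]
  rw [hT, hS₁, hS₃, hSm, hSM, hS]
  exact condensation φ hmd hdM hmR hdR hMR

end pairProd

theorem delta_ne_zero (A : Finset ℝ) : delta A ≠ 0 :=
  pairProd.ne_zero fun _ _ _ _ hxy => (sub_pos.mpr hxy).ne'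

theorem starOp_ne_zero {A : Finset ℝ} (h : ∀ x ∈ A, 1 / 2 ≤ x) : starOp A ≠ 0 :=
  pairProd.ne_zero fun x hx y hy hxy => by linarith [h x hx, h y hy]

theorem delta_mul_starOp (A : Finset ℝ) :
    delta A * starOp A = pairProd (fun x y => y * (y - 1) - x * (x - 1)) A := by
  simp only [delta, starOp, pairProd, ← Finset.prod_mul_distrib]
  exact Finset.prod_congr rfl fun _ _ => Finset.prod_congr rfl fun _ _ => by ring

theorem kuo_condensation_eq20_general (S : Finset ℝ) (m M d : ℝ)
    (hge1 : ∀ x ∈ S, 1 ≤ x)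
    (hmS : m ∈ S)
    (hMS : M ∈ S)
    (hdS : d ∉ S) (hmd : m < d) (hdM : d < M) :
    delta S * delta (((insert d S).erase m).erase M) ≠ 0 ∧
    starOp S * starOp (((insert d S).erase m).erase M) ≠ 0 ∧
    1 =
      delta ((insert d S).erase m) * delta (S.erase M) /
          (delta S * delta (((insert d S).erase m).erase M)) *
        (starOp ((insert d S).erase m) * starOp (S.erase M) /
          (starOp S * starOp (((insert d S).erase m).erase M))) +
      delta ((insert d S).erase M) * delta (S.erase m) /
          (delta S * delta (((insert d S).erase m).erase M)) *
        (starOp ((insert d S).erase M) * starOp (S.erase m) /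
          (starOp S * starOp (((insert d S).erase m).erase M))) := by
  have hT_ge : ∀ x ∈ ((insert d S).erase m).erase M, 1 / 2 ≤ x := by
    intro x hx
    rcases Finset.mem_insert.mp (Finset.mem_of_mem_erase (Finset.mem_of_mem_erase hx)) with rfl | hx
    · linarith [hge1 m hmS]
    · linarith [hge1 x hx]
  have hΔ := mul_ne_zero (delta_ne_zero S) (delta_ne_zero (((insert d S).erase m).erase M))
  have hstar := mul_ne_zero (starOp_ne_zero fun x hx => by linarith [hge1 x hx])
    (starOp_ne_zero hT_ge)
  have key := pairProd.condensation_erase (fun t : ℝ => t * (t - 1)) hmS hMS hdS hmd hdM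
  simp only [← delta_mul_starOp] at key
  refine ⟨hΔ, hstar, ?_⟩
  rw [div_mul_div_comm, div_mul_div_comm, ← add_div, eq_div_iff (mul_ne_zero hΔ hstar)]
  linear_combination -key

/-- Equation (20) of the paper. -/
theorem kuo_condensation_eq20 (S : Finset ℝ) (m M d : ℝ)
    (hcard : 2 ≤ S.card) (hge1 : ∀ x ∈ S, 1 ≤ x)
    (hmS : m ∈ S) (hm : ∀ x ∈ S, m ≤ x)
    (hMS : M ∈ S) (hM : ∀ x ∈ S, x ≤ M)
    (hdS : d ∉ S) (hmd : m < d) (hdM : d < M) :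
    delta S * delta (((insert d S).erase m).erase M) ≠ 0 ∧
    starOp S * starOp (((insert d S).erase m).erase M) ≠ 0 ∧
    1 =
      delta ((insert d S).erase m) * delta (S.erase M) /
          (delta S * delta (((insert d S).erase m).erase M)) *
        (starOp ((insert d S).erase m) * starOp (S.erase M) /
          (starOp S * starOp (((insert d S).erase m).erase M))) +
      delta ((insert d S).erase M) * delta (S.erase m) /
          (delta S * delta (((insert d S).erase m).erase M)) *
        (starOp ((insert d S).erase M) * starOp (S.erase m) /
          (starOp S * starOp (((insert d S).erase m).erase M))) :=
  kuo_condensation_eq20_general S m M d hge1 hmS hMS hdS hmd hdM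
end

section
/- Let S be a finite set of real numbers with at least two elements, let m = min S and M = max S, and let d be a real number with d ∉ S and d < M. Then (M − m)·Δ((S ∪ {d}) \ {m})·Δ(S \ {M}) = (M − d)·Δ(S)·Δ((S ∪ {d}) \ {m, M}). -/
/-!
Inserting a point `a ∉ A` multiplies `Δ(A)` by `∏_{y ∈ A} |y - a|`. With `T = S \ {m, M}`,
all four sets are `T` plus at most two of `m, M, d`, and both sides of the identity become
`|M - m| |M - d| Δ(T ∪ {M}) Δ(T) ∏_{y ∈ T} |y - d| |y - m|`.
-/

open Finset

lemma prod_abs_sub_eq_prod_filter_mul_prod_filter {a : ℝ} {A : Finset ℝ} (ha : a ∉ A) :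
    ∏ y ∈ A, |y - a| = (∏ y ∈ A with a < y, (y - a)) * ∏ y ∈ A with y < a, (a - y) := by
  have hlt : A.filter (fun y => ¬ a < y) = A.filter (· < a) :=
    filter_congr fun y hy => by
      rw [not_lt, le_iff_lt_or_eq, or_iff_left (ne_of_mem_of_not_mem hy ha)]
  rw [← prod_filter_mul_prod_filter_not A (a < ·), hlt]
  congr 1 <;> refine prod_congr rfl fun y hy => ?_
  · exact abs_of_pos (sub_pos.2 (mem_filter.1 hy).2)
  · exact abs_sub_comm y a ▸ abs_of_pos (sub_pos.2 (mem_filter.1 hy).2)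

lemma delta_insert {a : ℝ} {A : Finset ℝ} (ha : a ∉ A) :
    delta (insert a A) = (∏ y ∈ A, |y - a|) * delta A := by
  have hrow : ∀ x ∈ A, ∏ y ∈ insert a A with x < y, (y - x) =
      (if x < a then a - x else 1) * ∏ y ∈ A with x < y, (y - x) := by
    intro x _
    rw [filter_insert]
    split_ifs
    · exact prod_insert fun h => ha (mem_filter.1 h).1
    · exact (one_mul _).symm
  rw [delta, delta, prod_insert ha, filter_insert, if_neg (lt_irrefl a), prod_congr rfl hrow,
    prod_mul_distrib, ← prod_filter, prod_abs_sub_eq_prod_filter_mul_prod_filter ha]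
  ring

lemma abs_sub_mul_delta_exchange {S : Finset ℝ} {m M d : ℝ} (hmS : m ∈ S) (hMS : M ∈ S)
    (hmM : m ≠ M) (hdS : d ∉ S) :
    |M - m| * delta ((insert d S).erase m) * delta (S.erase M) =
      |M - d| * delta S * delta (((insert d S).erase m).erase M) := by
  set T := (S.erase m).erase M
  have hMT : M ∉ T := notMem_erase M _
  have hmT : m ∉ T := fun h => notMem_erase m S (mem_of_mem_erase h)
  have hdT : d ∉ T := fun h => hdS (mem_of_mem_erase (mem_of_mem_erase h))
  have hdm : d ≠ m := (ne_of_mem_of_not_mem hmS hdS).symm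
  have hdM : d ≠ M := (ne_of_mem_of_not_mem hMS hdS).symm
  have hSm : S.erase m = insert M T := (insert_erase (mem_erase.2 ⟨hmM.symm, hMS⟩)).symm
  have hS : S = insert m (insert M T) := by rw [← hSm, insert_erase hmS]
  have hSM : S.erase M = insert m T := by
    rw [hS, erase_insert_of_ne hmM, erase_insert hMT]
  have hdSm : (insert d S).erase m = insert d (insert M T) := by
    rw [erase_insert_of_ne hdm, hSm]
  rw [hdSm, erase_insert_of_ne hdM, erase_insert hMT, hSM, hS,
    delta_insert (by simp [hdT, hdM] : d ∉ insert M T),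
    delta_insert (by simp [hmT, hmM] : m ∉ insert M T),
    delta_insert hmT, delta_insert hdT, prod_insert hMT, prod_insert hMT]
  ring

/-- Ratio simplification (21) of the paper, multiplied out. -/
theorem delta_ratio_21 (S : Finset ℝ) (m M d : ℝ)
    (hcard : 2 ≤ S.card)
    (hmS : m ∈ S) (hm : ∀ x ∈ S, m ≤ x)
    (hMS : M ∈ S) (hM : ∀ x ∈ S, x ≤ M)
    (hdS : d ∉ S) (hdM : d < M) :
    (M - m) * delta ((insert d S).erase m) * delta (S.erase M) =
      (M - d) * delta S * delta (((insert d S).erase m).erase M) := by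
  obtain ⟨x, hxS, hxm⟩ := exists_mem_ne (by omega : 1 < S.card) m
  have hmM : m < M := lt_of_lt_of_le (lt_of_le_of_ne (hm x hxS) hxm.symm) (hM x hxS)
  have := abs_sub_mul_delta_exchange hmS hMS hmM.ne hdS
  rwa [abs_of_pos (sub_pos.2 hmM), abs_of_pos (sub_pos.2 hdM)] at this
end

section
/- Let S be a finite set of real numbers with at least two elements, let m = min S and M = max S, and let d be a real number with d ∉ S. Then (M + m)·⋆((S ∪ {d}) \ {m})·⋆(S \ {M}) = (M + d)·⋆(S)·⋆((S ∪ {d}) \ {m, M}). -/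
/-- `⋆(A) = ∏_{x,y ∈ A, x < y} (x + y)`. -/
noncomputable def starOp' (A : Finset ℝ) : ℝ :=
  ∏ x ∈ A, ∏ y ∈ A.filter (fun y => x < y), (x + y)

open Finset

lemma starOp'_insert {a : ℝ} {A : Finset ℝ} (ha : a ∉ A) :
    starOp' (insert a A) = (∏ x ∈ A, (a + x)) * starOp' A := by
  have hne : ∀ x ∈ A, x ≠ a := fun x hx h => ha (h ▸ hx)
  have inner : ∀ x ∈ A, ∏ y ∈ (insert a A).filter (x < ·), (x + y) =
      (if x < a then a + x else 1) * ∏ y ∈ A.filter (x < ·), (x + y) := by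
    intro x hx
    rw [filter_insert]
    split_ifs with h
    · rw [prod_insert (by simp [ha]), add_comm]
    · rw [one_mul]
  have above : A.filter (fun x => ¬x < a) = A.filter (a < ·) :=
    filter_congr fun x hx => by rw [not_lt, (hne x hx).symm.le_iff_lt]
  -- every `x ∈ A` lies either below `a` (outer index `x`) or above it (outer index `a`)
  have split : ∏ x ∈ A, (a + x) =
      (∏ x ∈ A, if x < a then a + x else 1) * ∏ y ∈ A.filter (a < ·), (a + y) := by
    rw [prod_ite, prod_const_one, mul_one, ← above, prod_filter_mul_prod_filter_not]
  unfold starOp'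
  rw [prod_insert ha, filter_insert, if_neg (lt_irrefl a), prod_congr rfl inner,
    prod_mul_distrib, split]
  ring

-- Peeling `m`, `d` and `M` off with `starOp'_insert`, both sides become
-- `(M + m) (M + d) ∏_U (m + x) ∏_U (d + x) ⋆(insert M U) ⋆(U)`.
lemma starOp'_ratio_insert {U : Finset ℝ} {m M d : ℝ} (hmU : m ∉ U) (hMU : M ∉ U)
    (hdU : d ∉ U) (hMd : M ≠ d) (hMm : M ≠ m) :
    (M + m) * starOp' (insert d (insert M U)) * starOp' (insert m U) =
      (M + d) * starOp' (insert m (insert M U)) * starOp' (insert d U) := by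
  have hdMU : d ∉ insert M U := by simp [hdU, hMd.symm]
  have hmMU : m ∉ insert M U := by simp [hmU, hMm.symm]
  rw [starOp'_insert hdMU, starOp'_insert hmMU, starOp'_insert hmU, starOp'_insert hdU,
    starOp'_insert hMU, prod_insert hMU, prod_insert hMU]
  ring

/-- Even-case analogue of the ratio simplification (22). -/
theorem star'_ratio_22 (S : Finset ℝ) (m M d : ℝ)
    (hcard : 2 ≤ S.card)
    (hmS : m ∈ S) (hm : ∀ x ∈ S, m ≤ x)
    (hMS : M ∈ S) (hM : ∀ x ∈ S, x ≤ M)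
    (hdS : d ∉ S) :
    (M + m) * starOp' ((insert d S).erase m) * starOp' (S.erase M) =
      (M + d) * starOp' S * starOp' (((insert d S).erase m).erase M) := by
  obtain ⟨b, hbS, hbm⟩ := exists_mem_ne (show 1 < S.card by omega) m
  have hmM : m ≠ M := ((lt_of_le_of_ne (hm b hbS) hbm.symm).trans_le (hM b hbS)).ne
  have hdm : d ≠ m := fun h => hdS (h ▸ hmS)
  have hdM : d ≠ M := fun h => hdS (h ▸ hMS)
  set U := (S.erase m).erase M
  have hS : S = insert m (insert M U) := by
    rw [insert_erase (mem_erase.2 ⟨hmM.symm, hMS⟩), insert_erase hmS]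
  have hSM : S.erase M = insert m U := by
    rw [show U = (S.erase M).erase m from erase_right_comm,
      insert_erase (mem_erase.2 ⟨hmM, hmS⟩)]
  have hdSm : (insert d S).erase m = insert d (insert M U) := by
    rw [erase_insert_of_ne hdm, insert_erase (mem_erase.2 ⟨hmM.symm, hMS⟩)]
  have hdSmM : ((insert d S).erase m).erase M = insert d U := by
    rw [erase_insert_of_ne hdm, erase_insert_of_ne hdM]
  rw [hdSmM, hdSm, hSM, hS]
  have hdU : d ∉ U := fun h => hdS (mem_of_mem_erase (mem_of_mem_erase h))
  exact starOp'_ratio_insert (by simp [U]) (by simp [U]) hdU hdM.symm hmM.symm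
end
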